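/- Let R be a reduced Noetherian ring of characteristic p > 0, and let I ⊆ J be ideals of W_n(R). Then the tight closures satisfy I* ⊆ J*, (I*)^{[p]} ⊆ (I^{[p]})*, and if β ∈ W_{n-1}(R) satisfies β ∈ (I_{n-1}^{[p]})* (with respect to an ideal I_{n-1} of W_{n-1}(R) generated by a fixed set of elements whose images generate I in W_n(R) via V-compatibility), then V(β) ∈ I*. Concretely: if there exists a nonzerodivisor c' ∈ R with [c']·F^e(β) ∈ I_{n-1}^{[p^{e+1}]} for all e ≥ 0, where I_{n-1} = (R(α_1),…,R(α_r)) and I = (α_1,…,α_r) ⊆ W_n(R), then [c'^p]·F^e(V(β)) ∈ I^{[p^e]} for all e ≥ 0, so V(β) ∈ I*. -/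

import Mathlib

noncomputable section

/-- Verschiebung on truncated Witt vectors. -/
def TWV.V {p : ℕ} [Fact p.Prime] {R : Type*} [CommRing R] {n : ℕ}
    (x : TruncatedWittVector p n R) : TruncatedWittVector p (n + 1) R :=
  WittVector.truncateFun (n + 1) (WittVector.verschiebung x.out)

/-- Frobenius on truncated Witt vectors over a ring of characteristic `p`,
acting coordinatewise by `x ↦ x ^ p`. -/
def TWV.F {p : ℕ} [Fact p.Prime] {R : Type*} [CommRing R] {n : ℕ}
    (x : TruncatedWittVector p n R) : TruncatedWittVector p n R :=
  TruncatedWittVector.mk p fun i => x.coeff i ^ p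

/-- Teichmüller lift to truncated Witt vectors. -/
def TWV.tm (p : ℕ) [Fact p.Prime] {R : Type*} [CommRing R] (n : ℕ) (x : R) :
    TruncatedWittVector p n R :=
  WittVector.truncateFun n (WittVector.teichmuller p x)

/-- Witt-vector tight closure of an ideal of the truncated Witt vectors. -/
def TWV.star {p : ℕ} [Fact p.Prime] {R : Type*} [CommRing R] {n : ℕ}
    (I : Ideal (TruncatedWittVector p n R)) : Set (TruncatedWittVector p n R) :=
  {α | ∃ c ∈ nonZeroDivisors R, ∀ e : ℕ,
    TWV.tm p n c * TWV.F^[e] α ∈ Ideal.span (TWV.F^[e] '' I)}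

/-!
Tight closure is an ideal, and `F` is a ring endomorphism with `F [c] = [c ^ p]`, so `F` maps `I*`
into `(I^[p])*`. For the Verschiebung, `F` commutes with `V`, and the projection formula
`V z * y = V (z * F (y|ₘ))` shows that `V` maps `F (J|ₘ)` into `J`. With `J = I^[p^e]` and
`[c'^(p²)] = [c'^(p²-1)] * [c']` this gives `[c'^p] F^e (V β) = V ([c'^(p²)] F^e β) ∈ I^[p^e]`.
-/

namespace TWV

open WittVector

variable {p : ℕ} [Fact p.Prime] {R : Type*} [CommRing R] {n m : ℕ}

lemma tm_eq (a : R) : tm p n a = WittVector.truncate n (teichmuller p a) := rfl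

lemma tm_mul (a b : R) : tm p n (a * b) = tm p n a * tm p n b := by
  simp only [tm_eq, map_mul]

lemma truncate_tm (a : R) :
    TruncatedWittVector.truncate (Nat.le_succ m) (tm p (m + 1) a) = tm p m a :=
  TruncatedWittVector.truncate_wittVector_truncate (Nat.le_succ m) (teichmuller p a)

lemma V_truncate (X : WittVector p R) :
    V (WittVector.truncate m X) = WittVector.truncate (m + 1) (verschiebung X) := by
  ext ⟨_ | j, hj⟩
  · simp [V, verschiebung_coeff_zero]
  · simpa [V, verschiebung_coeff_succ, coeff_truncate] using
      TruncatedWittVector.coeff_out (WittVector.truncate m X) ⟨j, by omega⟩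

lemma V_add (x y : TruncatedWittVector p m R) : V (x + y) = V x + V y := by
  obtain ⟨X, rfl⟩ := WittVector.truncate_surjective p m R x
  obtain ⟨Y, rfl⟩ := WittVector.truncate_surjective p m R y
  simp only [← map_add, V_truncate]

lemma V_zero : V (0 : TruncatedWittVector p m R) = 0 := by
  simpa using V_add (0 : TruncatedWittVector p m R) 0

lemma truncate_F {k : ℕ} (h : k ≤ n) (x : TruncatedWittVector p n R) :
    TruncatedWittVector.truncate h (F x) = F (TruncatedWittVector.truncate h x) := by
  ext i
  simp [F, TruncatedWittVector.coeff_truncate]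

lemma star_mono {I J : Ideal (TruncatedWittVector p n R)} (h : I ≤ J) : star I ⊆ star J :=
  fun _ ⟨c, hc, hx⟩ => ⟨c, hc, fun e => Ideal.span_mono (Set.image_mono h) (hx e)⟩

variable [CharP R p]

lemma F_truncate (X : WittVector p R) :
    F (WittVector.truncate n X) = WittVector.truncate n (frobenius X) := by
  ext i
  simp [F, coeff_truncate, coeff_frobenius_charP]

variable (p R n) in
def frobeniusHom :
    TruncatedWittVector p n R →+* TruncatedWittVector p n R where
  toFun := F
  map_one' := by simpa using F_truncate (n := n) (1 : WittVector p R)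
  map_zero' := by simpa using F_truncate (n := n) (0 : WittVector p R)
  map_mul' x y := by
    obtain ⟨X, rfl⟩ := WittVector.truncate_surjective p n R x
    obtain ⟨Y, rfl⟩ := WittVector.truncate_surjective p n R y
    simp only [← map_mul, F_truncate]
  map_add' x y := by
    obtain ⟨X, rfl⟩ := WittVector.truncate_surjective p n R x
    obtain ⟨Y, rfl⟩ := WittVector.truncate_surjective p n R y
    simp only [← map_add, F_truncate]

@[simp]
lemma frobeniusHom_apply (x : TruncatedWittVector p n R) : frobeniusHom p R n x = F x := rfl

lemma coe_frobeniusHom_pow (e : ℕ) :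
    ⇑(frobeniusHom p R n ^ e) = (F^[e] : TruncatedWittVector p n R → _) :=
  RingHom.coe_pow _ e

lemma span_image_F_iterate (e : ℕ) (I : Ideal (TruncatedWittVector p n R)) :
    Ideal.span (F^[e] '' I) = I.map (frobeniusHom p R n ^ e) := by
  rw [← coe_frobeniusHom_pow]; rfl

lemma F_tm (a : R) : F (tm p n a) = tm p n (a ^ p) := by
  rw [tm_eq, F_truncate, frobenius_eq_map_frobenius, map_teichmuller, frobenius_def, tm_eq]

lemma V_F (x : TruncatedWittVector p m R) : V (F x) = F (V x) := by
  obtain ⟨X, rfl⟩ := WittVector.truncate_surjective p m R x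
  rw [F_truncate, V_truncate, V_truncate, F_truncate, verschiebung_frobenius_comm]

lemma map_frobeniusHom_pow_map_truncate {k : ℕ} (h : k ≤ n) (e : ℕ)
    (I : Ideal (TruncatedWittVector p n R)) :
    (I.map (TruncatedWittVector.truncate h)).map (frobeniusHom p R k ^ e) =
      (I.map (frobeniusHom p R n ^ e)).map (TruncatedWittVector.truncate h) := by
  simp only [Ideal.map_map]
  congr 1
  refine RingHom.ext fun x => ?_
  simp only [RingHom.comp_apply, coe_frobeniusHom_pow]
  exact ((Function.Semiconj.iterate_right (truncate_F h) e) x).symm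

lemma V_mul (z : TruncatedWittVector p m R) (y : TruncatedWittVector p (m + 1) R) :
    V z * y = V (z * F (TruncatedWittVector.truncate (Nat.le_succ m) y)) := by
  obtain ⟨Z, rfl⟩ := WittVector.truncate_surjective p m R z
  obtain ⟨Y, rfl⟩ := WittVector.truncate_surjective p (m + 1) R y
  rw [TruncatedWittVector.truncate_wittVector_truncate, F_truncate, ← map_mul, V_truncate,
    V_truncate, ← map_mul, verschiebung_mul_frobenius]

lemma tm_mul_V (a : R) (y : TruncatedWittVector p m R) :
    tm p (m + 1) a * V y = V (tm p m (a ^ p) * y) := by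
  rw [mul_comm, V_mul, truncate_tm, F_tm, mul_comm]

lemma V_mem_of_mem_map_truncate {J : Ideal (TruncatedWittVector p (m + 1) R)}
    {x : TruncatedWittVector p m R}
    (hx : x ∈ (J.map (TruncatedWittVector.truncate (Nat.le_succ m))).map (frobeniusHom p R m)) :
    V x ∈ J := by
  -- strengthened to all multiples of `x`, so that the span induction goes through
  suffices ∀ z, V (z * x) ∈ J by simpa using this 1
  rw [Ideal.map_map] at hx
  induction hx using Submodule.span_induction with
  | mem _ hy =>
    obtain ⟨y, hy, rfl⟩ := hy
    intro z
    rw [RingHom.comp_apply, frobeniusHom_apply, ← V_mul]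
    exact J.mul_mem_left _ hy
  | zero => exact fun z => by rw [mul_zero, V_zero]; exact J.zero_mem
  | add x y _ _ hx hy => exact fun z => by rw [mul_add, V_add]; exact J.add_mem (hx z) (hy z)
  | smul a x _ hx => exact fun z => by rw [smul_eq_mul, ← mul_assoc]; exact hx (z * a)

lemma mem_star_iff {I : Ideal (TruncatedWittVector p n R)} {x : TruncatedWittVector p n R} :
    x ∈ star I ↔ ∃ c ∈ nonZeroDivisors R,
      ∀ e, tm p n c * (frobeniusHom p R n ^ e) x ∈ I.map (frobeniusHom p R n ^ e) := by
  simp only [star, Set.mem_ofPred_eq, span_image_F_iterate, coe_frobeniusHom_pow]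

def starIdeal (I : Ideal (TruncatedWittVector p n R)) : Ideal (TruncatedWittVector p n R) where
  carrier := star I
  zero_mem' := mem_star_iff.2 ⟨1, one_mem _, fun e => by simp⟩
  add_mem' {x y} hx hy := by
    obtain ⟨c, hc, hcx⟩ := mem_star_iff.1 hx
    obtain ⟨d, hd, hdy⟩ := mem_star_iff.1 hy
    refine mem_star_iff.2 ⟨c * d, mul_mem hc hd, fun e => ?_⟩
    have : tm p n (c * d) * (frobeniusHom p R n ^ e) (x + y) =
        tm p n d * (tm p n c * (frobeniusHom p R n ^ e) x) +
          tm p n c * (tm p n d * (frobeniusHom p R n ^ e) y) := by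
      rw [map_add, tm_mul]; ring
    rw [this]
    exact add_mem (Ideal.mul_mem_left _ _ (hcx e)) (Ideal.mul_mem_left _ _ (hdy e))
  smul_mem' a x hx := by
    obtain ⟨c, hc, hcx⟩ := mem_star_iff.1 hx
    refine mem_star_iff.2 ⟨c, hc, fun e => ?_⟩
    rw [smul_eq_mul, map_mul, mul_left_comm]
    exact Ideal.mul_mem_left _ _ (hcx e)

lemma map_frobeniusHom_map_frobeniusHom_pow (e : ℕ) (I : Ideal (TruncatedWittVector p n R)) :
    (I.map (frobeniusHom p R n)).map (frobeniusHom p R n ^ e) =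
      (I.map (frobeniusHom p R n ^ e)).map (frobeniusHom p R n) := by
  simp only [Ideal.map_map, ← RingHom.mul_def, (Commute.self_pow _ e).eq]

lemma F_mem_star {I : Ideal (TruncatedWittVector p n R)} {x : TruncatedWittVector p n R}
    (hx : x ∈ star I) : F x ∈ star (I.map (frobeniusHom p R n)) := by
  obtain ⟨c, hc, hcx⟩ := mem_star_iff.1 hx
  refine mem_star_iff.2 ⟨c ^ p, pow_mem hc p, fun e => ?_⟩
  have hF : tm p n (c ^ p) * (frobeniusHom p R n ^ e) (F x) =
      frobeniusHom p R n (tm p n c * (frobeniusHom p R n ^ e) x) := by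
    rw [map_mul, frobeniusHom_apply (tm p n c), F_tm]
    exact congrArg _ (RingHom.congr_fun (Commute.self_pow _ e).eq x).symm
  rw [hF, map_frobeniusHom_map_frobeniusHom_pow]
  exact Ideal.mem_map_of_mem _ (hcx e)

lemma span_image_F_star_subset (I : Ideal (TruncatedWittVector p n R)) :
    (Ideal.span (F '' star I) : Set (TruncatedWittVector p n R)) ⊆ star (Ideal.span (F '' I)) :=
  SetLike.coe_subset_coe.2 <| (Ideal.span_le (I := starIdeal _)).2 <| by
    rintro _ ⟨x, hx, rfl⟩
    exact F_mem_star hx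

lemma tm_pow_mul_V_mem {I : Ideal (TruncatedWittVector p (m + 1) R)}
    {β : TruncatedWittVector p m R} {c : R} {e : ℕ}
    (h : tm p m c * (frobeniusHom p R m ^ e) β ∈
      (I.map (TruncatedWittVector.truncate (Nat.le_succ m))).map (frobeniusHom p R m ^ (e + 1))) :
    tm p (m + 1) (c ^ p) * (frobeniusHom p R (m + 1) ^ e) (V β) ∈
      I.map (frobeniusHom p R (m + 1) ^ e) := by
  have hV : (frobeniusHom p R (m + 1) ^ e) (V β) = V ((frobeniusHom p R m ^ e) β) := by
    simp only [coe_frobeniusHom_pow]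
    exact ((Function.Semiconj.iterate_right V_F e) β).symm
  have hp : p ≠ 0 := (Fact.out : p.Prime).ne_zero
  rw [hV, tm_mul_V, ← pow_mul, ← pow_sub_one_mul (mul_ne_zero hp hp), tm_mul, mul_assoc]
  refine V_mem_of_mem_map_truncate (Ideal.mul_mem_left _ _ ?_)
  rwa [← map_frobeniusHom_pow_map_truncate, Ideal.map_map, ← RingHom.mul_def, ← pow_succ']

end TWV

/-- Monotonicity of Witt tight closure, compatibility with Frobenius powers,
and the Verschiebung statement: if `[c']·F^e(β) ∈ I_{n-1}^{[p^{e+1}]}` for all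
`e` with `c'` a nonzerodivisor, where `I_{n-1}` is generated by the
restrictions of the generators of `I`, then `[c'^p]·F^e(V(β)) ∈ I^{[p^e]}`
for all `e`, hence `V(β) ∈ I*`. -/
theorem stmt9 {p : ℕ} [Fact p.Prime] {R : Type*} [CommRing R] [CharP R p] (m : ℕ) :
    (∀ I J : Ideal (TruncatedWittVector p (m + 1) R), I ≤ J →
      TWV.star I ⊆ TWV.star J) ∧
    (∀ I : Ideal (TruncatedWittVector p (m + 1) R),
      (Ideal.span (TWV.F '' TWV.star I) : Set (TruncatedWittVector p (m + 1) R)) ⊆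
        TWV.star (Ideal.span (TWV.F '' I))) ∧
    (∀ (r : ℕ) (α : Fin r → TruncatedWittVector p (m + 1) R)
      (β : TruncatedWittVector p m R) (c' : R), c' ∈ nonZeroDivisors R →
      (∀ e : ℕ, TWV.tm p m c' * TWV.F^[e] β ∈
        Ideal.span (TWV.F^[e + 1] ''
          (Ideal.span (Set.range fun i =>
            TruncatedWittVector.truncate (by omega) (α i)) :
              Ideal (TruncatedWittVector p m R)))) →
      (∀ e : ℕ, TWV.tm p (m + 1) (c' ^ p) * TWV.F^[e] (TWV.V β) ∈
        Ideal.span (TWV.F^[e] ''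
          (Ideal.span (Set.range α) : Ideal (TruncatedWittVector p (m + 1) R)))) ∧
      TWV.V β ∈ TWV.star (Ideal.span (Set.range α))) := by
  refine ⟨fun I J => TWV.star_mono, TWV.span_image_F_star_subset,
    fun r α β c' hc' hβ => ?_⟩
  have key : ∀ e : ℕ, TWV.tm p (m + 1) (c' ^ p) * TWV.F^[e] (TWV.V β) ∈
      Ideal.span (TWV.F^[e] ''
        (Ideal.span (Set.range α) : Ideal (TruncatedWittVector p (m + 1) R))) := by
    intro e
    have hβe := hβ e
    rw [Set.range_comp', ← Ideal.map_span, TWV.span_image_F_iterate,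
      ← TWV.coe_frobeniusHom_pow] at hβe
    rw [TWV.span_image_F_iterate, ← TWV.coe_frobeniusHom_pow]
    exact TWV.tm_pow_mul_V_mem hβe
  exact ⟨key, c' ^ p, pow_mem hc' p, key⟩
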